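/- arXiv:2504.06955 — 6 statements merged into one kernel-verified Lean document; each statement's English description precedes it below -/
import Mathlib

section
/- Let A be a real n×n matrix and let x̊, x : ℝ → EuclideanSpace ℝ (Fin n) be differentiable with derivatives A.mulVec (x̊ t) and A.mulVec (x t) at every t. Let α : ℝ → EuclideanSpace ℝ (Fin n) be differentiable with derivative -(Aᵀ).mulVec (α t) at every t. Suppose at time 0 we have ⟪α 0, x 0 - x̊ 0⟫ ≤ y₀ for a real number y₀. Then for every t ≥ 0, ⟪α t, x t - x̊ t⟫ ≤ y₀; that is, the trajectory x t remains in the moving halfspace {z : ⟪α t, z - x̊ t⟫ ≤ y₀}. -/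
open Matrix

open scoped RealInnerProductSpace

/-- `d/dt ⟪α, x⟫ = ⟪-T† α, x⟫ + ⟪α, T x⟫ = 0`. -/
theorem inner_eq_of_hasDerivAt_of_hasDerivAt_neg_adjoint {E : Type*}
    [NormedAddCommGroup E] [InnerProductSpace ℝ E] [CompleteSpace E] (T : E →L[ℝ] E)
    {α x : ℝ → E} (hx : ∀ t, HasDerivAt x (T (x t)) t)
    (hα : ∀ t, HasDerivAt α (-(ContinuousLinearMap.adjoint T) (α t)) t) (s t : ℝ) :
    ⟪α s, x s⟫ = ⟪α t, x t⟫ := by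
  have hderiv : ∀ t, HasDerivAt (fun t ↦ ⟪α t, x t⟫) 0 t := fun t ↦ by
    refine ((hα t).inner ℝ (hx t)).congr_deriv ?_
    rw [inner_neg_left, ContinuousLinearMap.adjoint_inner_left, add_neg_cancel]
  exact is_const_of_deriv_eq_zero (fun t ↦ (hderiv t).differentiableAt)
    (fun t ↦ (hderiv t).deriv) s t

theorem Matrix.adjoint_toEuclideanCLM_real {n : Type*} [Fintype n] [DecidableEq n]
    (A : Matrix n n ℝ) :
    ContinuousLinearMap.adjoint (toEuclideanCLM (𝕜 := ℝ) A) = toEuclideanCLM (𝕜 := ℝ) Aᵀ := by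
  rw [← conjTranspose_eq_transpose_of_trivial, ← star_eq_conjTranspose, map_star]
  rfl

theorem adjoint_halfspace_invariance {n : ℕ} (A : Matrix (Fin n) (Fin n) ℝ)
    (xc x α : ℝ → EuclideanSpace ℝ (Fin n)) (y₀ : ℝ)
    (hxc : ∀ t, HasDerivAt xc (WithLp.toLp 2 (A.mulVec (xc t))) t)
    (hx : ∀ t, HasDerivAt x (WithLp.toLp 2 (A.mulVec (x t))) t)
    (hα : ∀ t, HasDerivAt α (-(WithLp.toLp 2 (Aᵀ.mulVec (α t)))) t)
    (h0 : (inner ℝ (α 0) (x 0 - xc 0) : ℝ) ≤ y₀) :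
    ∀ t : ℝ, 0 ≤ t → (inner ℝ (α t) (x t - xc t) : ℝ) ≤ y₀ := by
  intro t _
  set T := toEuclideanCLM (n := Fin n) (𝕜 := ℝ) A
  have hdiff : ∀ t, HasDerivAt (fun t ↦ x t - xc t) (T (x t - xc t)) t := fun t ↦ by
    rw [map_sub]
    exact (hx t).sub (hxc t)
  have hα' : ∀ t, HasDerivAt α (-(ContinuousLinearMap.adjoint T) (α t)) t := by
    rw [adjoint_toEuclideanCLM_real]
    exact hα
  rwa [inner_eq_of_hasDerivAt_of_hasDerivAt_neg_adjoint T hdiff hα' t 0]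
end

section
/- Let A be a real n×n matrix, and let α : ℝ → Matrix (Fin K) (Fin n) ℝ be differentiable with derivative -(α t) * A at every t (the matrix adjoint dynamics α' = -αA). Let x̊, x : ℝ → EuclideanSpace ℝ (Fin n) be differentiable with derivatives A.mulVec (x̊ t) and A.mulVec (x t). If (α 0).mulVec (x 0 - x̊ 0) ≤ y₀ componentwise for a fixed y₀ ∈ EuclideanSpace ℝ (Fin K), then for every t ≥ 0 one has (α t).mulVec (x t - x̊ t) ≤ y₀ componentwise; that is, x t lies in the moving H-representation polytope {z : (α t).mulVec (z - x̊ t) ≤ y₀}. -/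
open Matrix

attribute [local instance] Matrix.normedAddCommGroup Matrix.normedSpace

/-! The quantity `α t *ᵥ (x t - xc t)` is a first integral: its derivative is
`-(α A)(x - xc) + α (A (x - xc)) = 0`, so it keeps its initial value for all times. -/

theorem HasDerivAt.ofLp {𝕜 ι : Type*} [NontriviallyNormedField 𝕜] [Fintype ι] {p : ENNReal}
    [Fact (1 ≤ p)] {E : ι → Type*} [∀ i, NormedAddCommGroup (E i)] [∀ i, NormedSpace 𝕜 (E i)]
    {f : 𝕜 → PiLp p E} {f' : PiLp p E} {t : 𝕜} (hf : HasDerivAt f f' t) :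
    HasDerivAt (fun s ↦ WithLp.ofLp (f s)) (WithLp.ofLp f') t :=
  (PiLp.hasFDerivAt_ofLp p (f t)).comp_hasDerivAt t hf

namespace Matrix

variable {𝕜 : Type*} [RCLike 𝕜] {m n : Type*} [Fintype m] [Fintype n]

theorem hasDerivAt_mulVec {α : 𝕜 → Matrix m n 𝕜} {v : 𝕜 → n → 𝕜} {α' : Matrix m n 𝕜}
    {v' : n → 𝕜} {t : 𝕜} (hα : HasDerivAt α α' t) (hv : HasDerivAt v v' t) :
    HasDerivAt (fun s ↦ α s *ᵥ v s) (α t *ᵥ v' + α' *ᵥ v t) t := by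
  simpa using ((mulVecBilin 𝕜 𝕜).toContinuousBilinearMap.hasDerivWithinAt_of_bilinear
    hα.hasDerivWithinAt hv.hasDerivWithinAt (s := Set.univ)).hasDerivAt Filter.univ_mem

theorem mulVec_eq_of_hasDerivAt_adjoint {A : Matrix n n 𝕜} {α : 𝕜 → Matrix m n 𝕜}
    {v : 𝕜 → n → 𝕜} (hα : ∀ t, HasDerivAt α (-(α t) * A) t)
    (hv : ∀ t, HasDerivAt v (A *ᵥ v t) t) (s t : 𝕜) :
    α s *ᵥ v s = α t *ᵥ v t := by
  have hderiv : ∀ t, HasDerivAt (fun s ↦ α s *ᵥ v s) 0 t := fun t ↦ by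
    simpa [mulVec_mulVec, neg_mulVec] using hasDerivAt_mulVec (hα t) (hv t)
  exact is_const_of_deriv_eq_zero (fun t ↦ (hderiv t).differentiableAt)
    (fun t ↦ (hderiv t).deriv) s t

end Matrix

theorem adjoint_polytope_invariance {n K : ℕ} (A : Matrix (Fin n) (Fin n) ℝ)
    (α : ℝ → Matrix (Fin K) (Fin n) ℝ)
    (hα : ∀ t, HasDerivAt α (-(α t) * A) t)
    (xc x : ℝ → EuclideanSpace ℝ (Fin n))
    (hxc : ∀ t, HasDerivAt xc (WithLp.toLp 2 (A.mulVec (xc t))) t)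
    (hx : ∀ t, HasDerivAt x (WithLp.toLp 2 (A.mulVec (x t))) t)
    (y₀ : EuclideanSpace ℝ (Fin K))
    (h0 : ∀ k, (α 0).mulVec (x 0 - xc 0) k ≤ y₀ k) :
    ∀ t : ℝ, 0 ≤ t → ∀ k, (α t).mulVec (x t - xc t) k ≤ y₀ k := by
  intro t _ k
  have hdiff (t : ℝ) : HasDerivAt (fun s ↦ WithLp.ofLp (x s) - WithLp.ofLp (xc s))
      (A *ᵥ (WithLp.ofLp (x t) - WithLp.ofLp (xc t))) t := by
    rw [mulVec_sub]
    exact (hx t).ofLp.sub (hxc t).ofLp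
  rw [mulVec_eq_of_hasDerivAt_adjoint hα hdiff t 0]
  exact h0 k
end

section
/- (Fixed dual vectors for a nonlinear system.) Let f : EuclideanSpace ℝ (Fin n) → EuclideanSpace ℝ (Fin n) be locally Lipschitz, let α ∈ Matrix (Fin K) (Fin n) ℝ be a fixed matrix, and let x̊ : [t₀,t_f] → ℝⁿ be differentiable with derivative f (x̊ t). Let y : [t₀,t_f] → ℝ^K be absolutely continuous (y t = y t₀ + ∫_{t₀}^t y' s ds with y' integrable) and suppose: (i) for every t and every k, the k-th facet of the polytope {x : α.mulVec (x - x̊ t) ≤ y t} (the subset where additionally ⟪α_k, x - x̊ t⟫ = (y t)_k, α_k being the k-th row of α) satisfies the facet-Lipschitz condition with respect to y; (ii) for a.e. t and every k, every x with α.mulVec (x - x̊ t) ≤ y t and ⟪α_k, x - x̊ t⟫ = (y t)_k satisfies ⟪α_k, f x - f (x̊ t)⟫ ≤ (y' t)_k. Then any differentiable x : [t₀,t_f] → ℝⁿ with derivative f (x t) and α.mulVec (x t₀ - x̊ t₀) ≤ y t₀ satisfies α.mulVec (x t - x̊ t) ≤ y t componentwise for all t ∈ [t₀,t_f]. -/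
open Matrix MeasureTheory

/-- The sup norm of a vector in `EuclideanSpace ℝ (Fin K)`. -/
noncomputable def supNorm {K : ℕ} (v : EuclideanSpace ℝ (Fin K)) : ℝ :=
  ‖(WithLp.equiv 2 (Fin K → ℝ)) v‖

/-- Membership in the `k`-th facet of the H-rep polytope `{x : α (x - xc) ≤ y}`. -/
def inPolyFacet {n K : ℕ} (α : Matrix (Fin K) (Fin n) ℝ)
    (xc : EuclideanSpace ℝ (Fin n)) (y : EuclideanSpace ℝ (Fin K)) (k : Fin K)
    (x : EuclideanSpace ℝ (Fin n)) : Prop :=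
  (∀ j, α.mulVec (x - xc) j ≤ y j) ∧ α.mulVec (x - xc) k = y k

/-- The `k`-th facet of the polytope `{x : α (x - xc) ≤ y}` is locally Lipschitz in `y`. -/
def PolyFacetLipschitz {n K : ℕ} (α : Matrix (Fin K) (Fin n) ℝ)
    (xc : EuclideanSpace ℝ (Fin n)) (y : EuclideanSpace ℝ (Fin K)) (k : Fin K) : Prop :=
  ∀ x, inPolyFacet α xc y k x →
    ∃ δ > (0:ℝ), ∃ ε > (0:ℝ), ∃ L > (0:ℝ),
      ∀ y₁ y₂ : EuclideanSpace ℝ (Fin K),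
        supNorm (y₁ - y) < ε → supNorm (y₂ - y) < ε →
        ∀ x₁, ‖x₁ - x‖ < δ → inPolyFacet α xc y₁ k x₁ →
          ∃ x₂, ‖x₂ - x‖ ≤ 2 * δ ∧ inPolyFacet α xc y₂ k x₂ ∧
            ‖x₁ - x₂‖ ≤ L * supNorm (y₁ - y₂)

/-
The offsets are absolutely continuous, so the excess `ζ(t) = α (x(t) - x̊(t)) - y(t)` satisfies
`ζ(t) - ζ(σ) = ∫_σ^t g` with `g = α (f(x) - f(x̊)) - y'`. Near a time `τ` at which `x(τ)` is still
in the polytope, the facet-Lipschitz condition lets us project `x(s)` onto the facets of the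
polytope at time `s` at a cost proportional to `‖ζ(s)⁺‖_∞`; by hypothesis (ii) and the local
Lipschitz continuity of `f`, `g_k(s) ≤ C ‖ζ(s)⁺‖_∞` whenever `ζ_k(s) ≥ 0`. Integrating from the
last time `ζ_k` was nonpositive gives `‖ζ(t)⁺‖_∞ ≤ C ∫_τ^t ‖ζ⁺‖_∞`, so `ζ⁺ = 0` near `τ` by
Grönwall, and a continuous induction on `[t₀, t_f]` finishes the proof.
-/

open Set Filter Topology WithLp

theorem continuousOn_of_forall_sub_eq_integral {E : Type*} [NormedAddCommGroup E]
    [NormedSpace ℝ E] {z g : ℝ → E} {a b : ℝ} (hg : IntegrableOn g (Icc a b))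
    (hz : ∀ t ∈ Icc a b, z t - z a = ∫ s in a..t, g s) : ContinuousOn z (Icc a b) := by
  refine ((continuousOn_const (c := z a)).add
    (intervalIntegral.continuousOn_primitive hg)).congr fun t ht => ?_
  rw [Pi.add_apply, ← intervalIntegral.integral_of_le ht.1, ← hz t ht, add_sub_cancel]

theorem sub_eq_integral_of_eq_add_integral {E : Type*} [NormedAddCommGroup E]
    [NormedSpace ℝ E] {z g : ℝ → E} {a b : ℝ} (hg : IntegrableOn g (Icc a b))
    (hz : ∀ t ∈ Icc a b, z t = z a + ∫ s in a..t, g s) :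
    ∀ σ ∈ Icc a b, ∀ t ∈ Icc a b, z t - z σ = ∫ s in σ..t, g s := by
  intro σ hσ t ht
  have hint : ∀ u ∈ Icc a b, IntervalIntegrable g volume a u := fun u hu =>
    (hg.mono_set (uIcc_subset_Icc (left_mem_Icc.2 (hu.1.trans hu.2)) hu)).intervalIntegrable
  rw [hz t ht, hz σ hσ, add_sub_add_left_eq_sub,
    intervalIntegral.integral_interval_sub_left (hint t ht) (hint σ hσ)]

theorem Pi.continuous_posPart {ι : Type*} : Continuous fun v : ι → ℝ => v⁺ :=
  continuous_pi fun j => (continuous_apply j).sup continuous_const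

theorem le_integral_of_ae_le_of_nonneg {z g B : ℝ → ℝ} {a b : ℝ} (hab : a ≤ b)
    (hz : ContinuousOn z (Icc a b)) (hza : z a ≤ 0)
    (hzg : ∀ σ ∈ Icc a b, z b - z σ = ∫ s in σ..b, g s)
    (hg : IntegrableOn g (Icc a b)) (hB : IntegrableOn B (Icc a b))
    (hB0 : ∀ s ∈ Icc a b, 0 ≤ B s)
    (hgB : ∀ᵐ s ∂volume.restrict (Icc a b), 0 ≤ z s → g s ≤ B s) :
    z b ≤ ∫ s in a..b, B s := by
  rcases le_or_gt (z b) 0 with hb | hb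
  · exact hb.trans (intervalIntegral.integral_nonneg hab hB0)
  -- integrate from the last time `σ` at which `z` was nonpositive
  have hT : IsCompact (Icc a b ∩ z ⁻¹' Iic 0) :=
    isCompact_Icc.of_isClosed_subset
      (hz.preimage_isClosed_of_isClosed isClosed_Icc isClosed_Iic) inter_subset_left
  obtain ⟨σ, ⟨hσ, hzσ : z σ ≤ 0⟩, hσmax⟩ := hT.exists_isGreatest ⟨a, left_mem_Icc.2 hab, hza⟩
  have hσb : σ < b := hσ.2.lt_of_ne fun h => by rw [h] at hzσ; exact hzσ.not_gt hb
  have hσab : Icc σ b ⊆ Icc a b := Icc_subset_Icc_left hσ.1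
  have hpos : ∀ s ∈ Ioc σ b, 0 ≤ z s := fun s hs => le_of_not_gt fun hneg =>
    hs.1.not_ge (hσmax ⟨⟨hσ.1.trans hs.1.le, hs.2⟩, hneg.le⟩)
  calc z b ≤ z b - z σ := by linarith
    _ = ∫ s in σ..b, g s := hzg σ hσ
    _ ≤ ∫ s in σ..b, B s := by
      refine intervalIntegral.integral_mono_ae_restrict hσb.le
        ((intervalIntegrable_iff_integrableOn_Icc_of_le hσb.le).2 (hg.mono_set hσab))
        ((intervalIntegrable_iff_integrableOn_Icc_of_le hσb.le).2 (hB.mono_set hσab)) ?_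
      filter_upwards [ae_restrict_of_ae_restrict_of_subset hσab hgB,
        ae_restrict_mem measurableSet_Icc, ae_restrict_of_ae (Measure.ae_ne volume σ)]
        with s hs hsI hsσ
      exact hs (hpos s ⟨hsI.1.lt_of_ne' hsσ, hsI.2⟩)
    _ ≤ ∫ s in a..b, B s := by
      refine intervalIntegral.integral_mono_interval hσ.1 hσb.le le_rfl ?_
        ((intervalIntegrable_iff_integrableOn_Icc_of_le hab).2 hB)
      filter_upwards [ae_restrict_mem measurableSet_Ioc] with s hs
      exact hB0 s (Ioc_subset_Icc_self hs)

theorem eq_zero_of_le_mul_integral {ψ : ℝ → ℝ} {a b C : ℝ} (hψ : ContinuousOn ψ (Icc a b))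
    (hψ0 : ∀ t ∈ Icc a b, 0 ≤ ψ t) (hle : ∀ t ∈ Icc a b, ψ t ≤ C * ∫ s in a..t, ψ s) :
    ∀ t ∈ Icc a b, ψ t = 0 := by
  have hint : ∀ t ∈ Icc a b, 0 ≤ ∫ s in a..t, ψ s := fun t ht =>
    intervalIntegral.integral_nonneg ht.1 fun s hs => hψ0 s ⟨hs.1, hs.2.trans ht.2⟩
  have hF : ∀ t ∈ Icc a b, ∫ s in a..t, ψ s = 0 := by
    refine eq_zero_of_abs_deriv_le_mul_abs_self_of_eq_zero_right (f' := ψ) (K := C) ?_ ?_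
      intervalIntegral.integral_same fun t ht => ?_
    · exact (intervalIntegral.continuousOn_primitive hψ.integrableOn_Icc).congr fun t ht =>
        intervalIntegral.integral_of_le ht.1
    · intro t ht
      have : Fact (t ∈ Icc a b) := ⟨Ico_subset_Icc_self ht⟩
      exact (intervalIntegral.integral_hasDerivWithinAt_right
        (hψ.mono (uIcc_subset_Icc (left_mem_Icc.2 (ht.1.trans ht.2.le))
          (Ico_subset_Icc_self ht))).intervalIntegrable
        (hψ.stronglyMeasurableAtFilter_nhdsWithin measurableSet_Icc t)
        (hψ t (Ico_subset_Icc_self ht))).mono_of_mem_nhdsWithin (Icc_mem_nhdsGE_of_mem ht)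
    · have ht' := Ico_subset_Icc_self ht
      rw [Real.norm_of_nonneg (hψ0 t ht'), Real.norm_of_nonneg (hint t ht')]
      exact hle t ht'
  intro t ht
  exact le_antisymm (by simpa [hF t ht] using hle t ht) (hψ0 t ht)

section Barrier

variable {ι : Type*} [Fintype ι] {ζ g : ℝ → ι → ℝ} {a b : ℝ}

theorem nonpos_of_ae_le_mul_norm_posPart {C : ℝ} (hC : 0 ≤ C) (hζa : ζ a ≤ 0)
    (hg : IntegrableOn g (Icc a b))
    (hζg : ∀ σ ∈ Icc a b, ∀ t ∈ Icc a b, ζ t - ζ σ = ∫ s in σ..t, g s)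
    (hbound : ∀ᵐ s ∂volume.restrict (Icc a b), ∀ j, 0 ≤ ζ s j → g s j ≤ C * ‖(ζ s)⁺‖) :
    ∀ t ∈ Icc a b, ζ t ≤ 0 := by
  have hζ : ContinuousOn ζ (Icc a b) := continuousOn_of_forall_sub_eq_integral hg fun t ht =>
    hζg a (left_mem_Icc.2 (ht.1.trans ht.2)) t ht
  have hζg' : ∀ j, ∀ σ ∈ Icc a b, ∀ t ∈ Icc a b, ζ t j - ζ σ j = ∫ s in σ..t, g s j := by
    intro j σ hσ t ht
    rw [← Pi.sub_apply, hζg σ hσ t ht]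
    exact ((ContinuousLinearMap.proj (R := ℝ) (φ := fun _ : ι => ℝ) j).intervalIntegral_comp_comm
      (hg.mono_set (uIcc_subset_Icc hσ ht)).intervalIntegrable).symm
  have hψ : ContinuousOn (fun t => ‖(ζ t)⁺‖) (Icc a b) :=
    (Pi.continuous_posPart.comp_continuousOn hζ).norm
  have hle : ∀ t ∈ Icc a b, ‖(ζ t)⁺‖ ≤ C * ∫ s in a..t, ‖(ζ s)⁺‖ := by
    intro t ht
    have hsub : Icc a t ⊆ Icc a b := Icc_subset_Icc_right ht.2
    have hI : 0 ≤ C * ∫ s in a..t, ‖(ζ s)⁺‖ :=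
      mul_nonneg hC (intervalIntegral.integral_nonneg ht.1 fun _ _ => norm_nonneg _)
    refine (pi_norm_le_iff_of_nonneg hI).2 fun j => ?_
    rw [Pi.posPart_apply, Real.norm_of_nonneg (posPart_nonneg _)]
    refine sup_le ?_ hI
    rw [← intervalIntegral.integral_const_mul]
    refine le_integral_of_ae_le_of_nonneg ht.1
      (((continuous_apply j).comp_continuousOn hζ).mono hsub) (hζa j)
      (fun σ hσ => hζg' j σ (hsub hσ) t ht)
      ((ContinuousLinearMap.proj (R := ℝ) (φ := fun _ : ι => ℝ) j).integrable_comp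
        (hg.mono_set hsub))
      ((hψ.mono hsub).integrableOn_Icc.const_mul C) (fun s _ => mul_nonneg hC (norm_nonneg _)) ?_
    filter_upwards [ae_restrict_of_ae_restrict_of_subset hsub hbound] with s hs using hs j
  intro t ht
  exact posPart_eq_zero.1 <| norm_eq_zero.1 <|
    eq_zero_of_le_mul_integral hψ (fun _ _ => norm_nonneg _) hle t ht

theorem nonpos_of_forall_exists_ae_le_mul_norm_posPart (hζa : ζ a ≤ 0)
    (hg : IntegrableOn g (Icc a b))
    (hζg : ∀ σ ∈ Icc a b, ∀ t ∈ Icc a b, ζ t - ζ σ = ∫ s in σ..t, g s)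
    (hloc : ∀ τ ∈ Ico a b, ζ τ ≤ 0 → ∃ C ≥ 0, ∃ c > τ,
      ∀ᵐ s ∂volume.restrict (Icc τ c), ∀ j, 0 ≤ ζ s j → g s j ≤ C * ‖(ζ s)⁺‖) :
    ∀ t ∈ Icc a b, ζ t ≤ 0 := by
  have hζ : ContinuousOn ζ (Icc a b) := continuousOn_of_forall_sub_eq_integral hg fun t ht =>
    hζg a (left_mem_Icc.2 (ht.1.trans ht.2)) t ht
  refine IsClosed.Icc_subset_of_forall_mem_nhdsWithin (s := {t | ζ t ≤ 0}) ?_ hζa ?_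
  · rw [inter_comm]
    exact hζ.preimage_isClosed_of_isClosed isClosed_Icc isClosed_Iic
  rintro τ ⟨hτ : ζ τ ≤ 0, hτab⟩
  obtain ⟨C, hC, c, hτc, hbound⟩ := hloc τ hτab hτ
  have hτc' : τ < min c b := lt_min hτc hτab.2
  have hsub : Icc τ (min c b) ⊆ Icc a b := Icc_subset_Icc hτab.1 (min_le_right _ _)
  refine mem_of_superset (Icc_mem_nhdsGT hτc') fun t ht => ?_
  exact nonpos_of_ae_le_mul_norm_posPart hC hτ (hg.mono_set hsub)
    (fun σ hσ t ht => hζg σ (hsub hσ) t (hsub ht))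
    (ae_restrict_of_ae_restrict_of_subset (Icc_subset_Icc_right (min_le_left _ _)) hbound) t ht

end Barrier

noncomputable def Matrix.euclideanMulVecCLM {m n : Type*} [Fintype n] (α : Matrix m n ℝ) :
    EuclideanSpace ℝ n →L[ℝ] (m → ℝ) :=
  LinearMap.toContinuousLinearMap (α.mulVecLin ∘ₗ (WithLp.linearEquiv 2 ℝ (n → ℝ)).toLinearMap)

@[simp]
theorem Matrix.euclideanMulVecCLM_apply {m n : Type*} [Fintype n] (α : Matrix m n ℝ)
    (v : EuclideanSpace ℝ n) : α.euclideanMulVecCLM v = α *ᵥ v.ofLp := rfl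

theorem Matrix.abs_mulVec_apply_le {m n : Type*} [Fintype m] [Fintype n] (α : Matrix m n ℝ)
    (v : EuclideanSpace ℝ n) (k : m) : |(α *ᵥ v.ofLp) k| ≤ ‖α.euclideanMulVecCLM‖ * ‖v‖ :=
  (norm_le_pi_norm (α.euclideanMulVecCLM v) k).trans (α.euclideanMulVecCLM.le_opNorm v)

section Polytope

variable {n K : ℕ}

def polyExcess (α : Matrix (Fin K) (Fin n) ℝ) (xc : EuclideanSpace ℝ (Fin n))
    (y : EuclideanSpace ℝ (Fin K)) (x : EuclideanSpace ℝ (Fin n)) : Fin K → ℝ :=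
  α *ᵥ (x - xc) - y

variable {α : Matrix (Fin K) (Fin n) ℝ}

theorem continuous_polyExcess : Continuous fun q : EuclideanSpace ℝ (Fin n) ×
    EuclideanSpace ℝ (Fin K) × EuclideanSpace ℝ (Fin n) => polyExcess α q.1 q.2.1 q.2.2 := by
  unfold polyExcess
  fun_prop

theorem inPolyFacet_iff_polyExcess {c z : EuclideanSpace ℝ (Fin n)}
    {y : EuclideanSpace ℝ (Fin K)} {k : Fin K} :
    inPolyFacet α c y k z ↔ polyExcess α c y z ≤ 0 ∧ polyExcess α c y z k = 0 := by
  simp only [inPolyFacet, polyExcess, Pi.le_def, Pi.sub_apply, sub_nonpos, sub_eq_zero]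

theorem inPolyFacet_recenter {c c' z : EuclideanSpace ℝ (Fin n)}
    {y : EuclideanSpace ℝ (Fin K)} {k : Fin K} :
    inPolyFacet α c (y + toLp 2 (α *ᵥ (c' - c))) k z ↔ inPolyFacet α c' y k z := by
  have h : ∀ j, (α *ᵥ (z - c)) j = (α *ᵥ (z - c')) j + (α *ᵥ (c' - c)) j := by
    intro j
    rw [← Pi.add_apply, ← mulVec_add, sub_add_sub_cancel]
  simp only [inPolyFacet, h, WithLp.ofLp_add, Pi.add_apply, add_le_add_iff_right,
    add_left_inj]

theorem inPolyFacet_add_posPart_polyExcess {c z : EuclideanSpace ℝ (Fin n)}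
    {y : EuclideanSpace ℝ (Fin K)} {k : Fin K} (hk : 0 ≤ polyExcess α c y z k) :
    inPolyFacet α c (y + toLp 2 (polyExcess α c y z)⁺) k z := by
  have h : polyExcess α c (y + toLp 2 (polyExcess α c y z)⁺) z =
      polyExcess α c y z - (polyExcess α c y z)⁺ := by
    simp only [polyExcess, WithLp.ofLp_add]
    abel
  rw [inPolyFacet_iff_polyExcess, h, sub_nonpos, Pi.sub_apply, Pi.posPart_apply,
    posPart_eq_self.2 hk, sub_self]
  exact ⟨le_posPart _, rfl⟩

theorem PolyFacetLipschitz.exists_inPolyFacet_near {c p : EuclideanSpace ℝ (Fin n)}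
    {y₀ : EuclideanSpace ℝ (Fin K)} {k : Fin K}
    (h : PolyFacetLipschitz α c y₀ k) (hp : inPolyFacet α c y₀ k p) :
    ∃ δ > 0, ∃ L > 0, ∀ (c' z : EuclideanSpace ℝ (Fin n)) (y : EuclideanSpace ℝ (Fin K)),
      ‖z - p‖ < δ → supNorm (y + toLp 2 (α *ᵥ (c' - c)) - y₀) < δ →
      ‖(polyExcess α c' y z)⁺‖ < δ → 0 ≤ polyExcess α c' y z k →
      ∃ z', inPolyFacet α c' y k z' ∧ ‖z - z'‖ ≤ L * ‖(polyExcess α c' y z)⁺‖ := by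
  obtain ⟨δ, hδ, ε, hε, L, hL, hlip⟩ := h p hp
  refine ⟨min δ (ε / 2), by positivity, L, hL, fun c' z y hz hy hv hk => ?_⟩
  set w := y + toLp 2 (α *ᵥ (c' - c))
  set v := (polyExcess α c' y z)⁺
  have hw : supNorm (w - y₀) < ε / 2 := hy.trans_le (min_le_right _ _)
  have hwv : supNorm (w + toLp 2 v - y₀) < ε := calc
    supNorm (w + toLp 2 v - y₀) ≤ supNorm (w - y₀) + ‖v‖ := by
      rw [add_sub_right_comm]; exact norm_add_le _ _
    _ < ε / 2 + ε / 2 := add_lt_add hw (hv.trans_le (min_le_right _ _))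
    _ = ε := add_halves ε
  have hzY : inPolyFacet α c (w + toLp 2 v) k z := by
    rw [add_right_comm]
    exact inPolyFacet_recenter.2 (inPolyFacet_add_posPart_polyExcess hk)
  obtain ⟨z', -, hz', hzz'⟩ :=
    hlip _ w hwv (hw.trans (half_lt_self hε)) z (hz.trans_le (min_le_left _ _)) hzY
  refine ⟨z', inPolyFacet_recenter.1 hz', ?_⟩
  simpa [supNorm] using hzz'

/-- Here `q = (c', y, z)` is a center, offsets and a point near `(c, y₀, p)`: a bound on
`α k ⬝ᵥ f` over the `k`-th facet of the polytope `(c', y)` extends to `z` at a cost linear in the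
excess of `z`. -/
theorem PolyFacetLipschitz.exists_eventually_dotProduct_le
    {f : EuclideanSpace ℝ (Fin n) → EuclideanSpace ℝ (Fin n)} (hf : LocallyLipschitz f)
    {c p : EuclideanSpace ℝ (Fin n)} {y₀ : EuclideanSpace ℝ (Fin K)} {k : Fin K}
    (h : PolyFacetLipschitz α c y₀ k) (hp : inPolyFacet α c y₀ k p) :
    ∃ C ≥ 0, ∀ᶠ q in 𝓝 (c, y₀, p), ∀ β : ℝ, 0 ≤ polyExcess α q.1 q.2.1 q.2.2 k →
      (∀ z, inPolyFacet α q.1 q.2.1 k z → α k ⬝ᵥ f z ≤ β) →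
      α k ⬝ᵥ f q.2.2 ≤ β + C * ‖(polyExcess α q.1 q.2.1 q.2.2)⁺‖ := by
  obtain ⟨Kf, U, hU, hLip⟩ := hf p
  obtain ⟨r, hr, hball⟩ := Metric.mem_nhds_iff.1 hU
  obtain ⟨δ, hδ, L, hL, hnear⟩ := h.exists_inPolyFacet_near hp
  have hp0 : (polyExcess α c y₀ p)⁺ = 0 := posPart_eq_zero.2 (inPolyFacet_iff_polyExcess.1 hp).1
  have h₁ : ∀ᶠ q in 𝓝 (c, y₀, p), ‖q.2.2 - p‖ < min δ (r / 2) :=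
    ContinuousAt.eventually_lt (by fun_prop) continuousAt_const (by simpa using ⟨hδ, hr⟩)
  have h₂ : ∀ᶠ q in 𝓝 (c, y₀, p), supNorm (q.2.1 + toLp 2 (α *ᵥ (q.1 - c)) - y₀) < δ :=
    ContinuousAt.eventually_lt (by simp only [supNorm, WithLp.equiv_apply]; fun_prop)
      continuousAt_const (by simpa [supNorm] using hδ)
  have h₃ : ∀ᶠ q in 𝓝 (c, y₀, p), ‖(polyExcess α q.1 q.2.1 q.2.2)⁺‖ < min δ (r / (2 * L)) :=
    ContinuousAt.eventually_lt (Pi.continuous_posPart.comp continuous_polyExcess).norm.continuousAt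
      continuousAt_const (by simpa [hp0] using ⟨hδ, by positivity⟩)
  refine ⟨‖α.euclideanMulVecCLM‖ * Kf * L, by positivity, ?_⟩
  filter_upwards [h₁, h₂, h₃] with ⟨c', y, z⟩ h₁ h₂ h₃ β hk hβ
  obtain ⟨z', hz', hzz'⟩ :=
    hnear c' z y (h₁.trans_le (min_le_left _ _)) h₂ (h₃.trans_le (min_le_left _ _)) hk
  have hzU : z ∈ U := hball (mem_ball_iff_norm.2 (by linarith [min_le_right δ (r / 2)]))
  have hzz'' : ‖z - z'‖ < r / 2 := calc
    ‖z - z'‖ ≤ L * ‖(polyExcess α c' y z)⁺‖ := hzz'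
    _ < L * (r / (2 * L)) := mul_lt_mul_of_pos_left (h₃.trans_le (min_le_right _ _)) hL
    _ = r / 2 := by field_simp
  have hz'U : z' ∈ U := hball (mem_ball_iff_norm.2 (by
    linarith [norm_sub_le_norm_sub_add_norm_sub z' z p, norm_sub_rev z z',
      min_le_right δ (r / 2)]))
  calc α k ⬝ᵥ f z = α k ⬝ᵥ f z' + (α *ᵥ (f z - f z').ofLp) k := by
        simp [mulVec, dotProduct_sub]
    _ ≤ β + ‖α.euclideanMulVecCLM‖ * ‖f z - f z'‖ :=
        add_le_add (hβ z' hz') ((le_abs_self _).trans (α.abs_mulVec_apply_le _ k))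
    _ ≤ β + ‖α.euclideanMulVecCLM‖ * (Kf * (L * ‖(polyExcess α c' y z)⁺‖)) := by
        gcongr
        exact (hLip.norm_sub_le hzU hz'U).trans (by gcongr)
    _ = β + ‖α.euclideanMulVecCLM‖ * Kf * L * ‖(polyExcess α c' y z)⁺‖ := by ring

theorem exists_eventually_dotProduct_sub_le
    {f : EuclideanSpace ℝ (Fin n) → EuclideanSpace ℝ (Fin n)} (hf : LocallyLipschitz f)
    {c p : EuclideanSpace ℝ (Fin n)} {y₀ : EuclideanSpace ℝ (Fin K)}
    (h : ∀ k, PolyFacetLipschitz α c y₀ k) (hp : polyExcess α c y₀ p ≤ 0) :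
    ∃ C ≥ 0, ∀ᶠ q in 𝓝 (c, y₀, p), ∀ (d : EuclideanSpace ℝ (Fin n)) (β : Fin K → ℝ),
      (∀ k z, inPolyFacet α q.1 q.2.1 k z → α k ⬝ᵥ (f z - d) ≤ β k) →
      ∀ k, 0 ≤ polyExcess α q.1 q.2.1 q.2.2 k →
        α k ⬝ᵥ (f q.2.2 - d) ≤ β k + C * ‖(polyExcess α q.1 q.2.1 q.2.2)⁺‖ := by
  have hfacet : ∀ k, ∃ C ≥ 0, ∀ᶠ q in 𝓝 (c, y₀, p), ∀ (d : EuclideanSpace ℝ (Fin n)) (β : ℝ),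
      (∀ z, inPolyFacet α q.1 q.2.1 k z → α k ⬝ᵥ (f z - d) ≤ β) →
      0 ≤ polyExcess α q.1 q.2.1 q.2.2 k →
        α k ⬝ᵥ (f q.2.2 - d) ≤ β + C * ‖(polyExcess α q.1 q.2.1 q.2.2)⁺‖ := by
    intro k
    rcases (hp k).lt_or_eq with hlt | heq
    · refine ⟨0, le_rfl, ?_⟩
      filter_upwards [ContinuousAt.eventually_lt
        ((continuous_apply k).comp continuous_polyExcess).continuousAt continuousAt_const hlt]
        with q hq d β _ hk
      exact absurd hk hq.not_ge
    · obtain ⟨C, hC, hev⟩ :=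
        (h k).exists_eventually_dotProduct_le hf (inPolyFacet_iff_polyExcess.2 ⟨hp, heq⟩)
      refine ⟨C, hC, ?_⟩
      filter_upwards [hev] with q hq d β hβ hk
      have := hq (β + α k ⬝ᵥ d) hk fun z hz => by
        have := hβ z hz
        rw [dotProduct_sub] at this
        linarith
      rw [dotProduct_sub]
      linarith
  choose C hC hev using hfacet
  refine ⟨∑ k, C k, Finset.sum_nonneg fun k _ => hC k, ?_⟩
  filter_upwards [eventually_all.2 hev] with q hq d β hβ k hk
  calc α k ⬝ᵥ (f q.2.2 - d) ≤ β k + C k * ‖(polyExcess α q.1 q.2.1 q.2.2)⁺‖ :=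
        hq k d (β k) (hβ k) hk
    _ ≤ β k + (∑ k, C k) * ‖(polyExcess α q.1 q.2.1 q.2.2)⁺‖ := by
        gcongr
        exact Finset.single_le_sum (fun k _ => hC k) (Finset.mem_univ k)

theorem polyExcess_sub_eq_integral {a b : ℝ} {xc x xc' x' : ℝ → EuclideanSpace ℝ (Fin n)}
    {y y' : ℝ → EuclideanSpace ℝ (Fin K)}
    (hxc : ∀ t ∈ Icc a b, HasDerivAt xc (xc' t) t) (hx : ∀ t ∈ Icc a b, HasDerivAt x (x' t) t)
    (hxc' : ContinuousOn xc' (Icc a b)) (hx' : ContinuousOn x' (Icc a b))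
    (hy' : IntegrableOn y' (Icc a b)) (hy : ∀ t ∈ Icc a b, y t = y a + ∫ s in a..t, y' s) :
    ∀ σ ∈ Icc a b, ∀ t ∈ Icc a b,
      polyExcess α (xc t) (y t) (x t) - polyExcess α (xc σ) (y σ) (x σ) =
        ∫ s in σ..t, (α *ᵥ (x' s - xc' s) - y' s) := by
  intro σ hσ t ht
  have hsub := uIcc_subset_Icc hσ ht
  set A := α.euclideanMulVecCLM
  have hAint : IntervalIntegrable (fun s => A (x' s - xc' s)) volume σ t :=
    (A.continuous.comp_continuousOn ((hx'.sub hxc').mono hsub)).intervalIntegrable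
  have hA : ∫ s in σ..t, A (x' s - xc' s) = A (x t - xc t) - A (x σ - xc σ) :=
    intervalIntegral.integral_eq_sub_of_hasDerivAt
      (fun s hs => A.hasFDerivAt.comp_hasDerivAt s ((hx s (hsub hs)).sub (hxc s (hsub hs))))
      hAint
  have hyint : IntervalIntegrable y' volume σ t := (hy'.mono_set hsub).intervalIntegrable
  have hY : ∫ s in σ..t, (y' s).ofLp = (y t).ofLp - (y σ).ofLp := by
    rw [← WithLp.ofLp_sub, sub_eq_integral_of_eq_add_integral hy' hy σ hσ t ht]
    exact (EuclideanSpace.equiv (Fin K) ℝ).toContinuousLinearMap.intervalIntegral_comp_comm hyint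
  have hYint : IntervalIntegrable (fun s => (y' s).ofLp) volume σ t :=
    IntegrableOn.intervalIntegrable
      ((EuclideanSpace.equiv (Fin K) ℝ).toContinuousLinearMap.integrable_comp (hy'.mono_set hsub))
  simp only [A, euclideanMulVecCLM_apply, WithLp.ofLp_sub] at hA hAint
  rw [intervalIntegral.integral_sub hAint hYint, hA, hY]
  simp only [polyExcess, mulVec_sub]
  abel

end Polytope

theorem fixed_dual_vectors_general {n K : ℕ}
    (f : EuclideanSpace ℝ (Fin n) → EuclideanSpace ℝ (Fin n))
    (hf : LocallyLipschitz f)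
    (α : Matrix (Fin K) (Fin n) ℝ)
    (t₀ tf : ℝ)
    (xc : ℝ → EuclideanSpace ℝ (Fin n))
    (hxc : ∀ t ∈ Set.Icc t₀ tf, HasDerivAt xc (f (xc t)) t)
    (y : ℝ → EuclideanSpace ℝ (Fin K)) (y' : ℝ → EuclideanSpace ℝ (Fin K))
    (hy'int : IntegrableOn y' (Set.Icc t₀ tf))
    (hy : ∀ t ∈ Set.Icc t₀ tf, y t = y t₀ + ∫ s in t₀..t, y' s)
    -- (i) locally Lipschitz facets
    (hfacet : ∀ t ∈ Set.Icc t₀ tf, ∀ k : Fin K, PolyFacetLipschitz α (xc t) (y t) k)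
    -- (ii) offset dynamics dominate the flow along each facet
    (hξ : ∀ᵐ t ∂(volume.restrict (Set.Icc t₀ tf)), ∀ k : Fin K,
      ∀ x : EuclideanSpace ℝ (Fin n), inPolyFacet α (xc t) (y t) k x →
        α k ⬝ᵥ (f x - f (xc t)) ≤ y' t k)
    (x : ℝ → EuclideanSpace ℝ (Fin n))
    (hx : ∀ t ∈ Set.Icc t₀ tf, HasDerivAt x (f (x t)) t)
    (hx₀ : ∀ k, α.mulVec (x t₀ - xc t₀) k ≤ y t₀ k) :
    ∀ t ∈ Set.Icc t₀ tf, ∀ k, α.mulVec (x t - xc t) k ≤ y t k := by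
  have hxc_cont : ContinuousOn xc (Icc t₀ tf) := fun t ht =>
    (hxc t ht).continuousAt.continuousWithinAt
  have hx_cont : ContinuousOn x (Icc t₀ tf) := fun t ht =>
    (hx t ht).continuousAt.continuousWithinAt
  have hy_cont : ContinuousOn y (Icc t₀ tf) :=
    continuousOn_of_forall_sub_eq_integral hy'int fun t ht => by rw [hy t ht, add_sub_cancel_left]
  have hfxc := hf.continuous.comp_continuousOn hxc_cont
  have hfx := hf.continuous.comp_continuousOn hx_cont
  have hζ := nonpos_of_forall_exists_ae_le_mul_norm_posPart
    (ζ := fun t => polyExcess α (xc t) (y t) (x t)) (fun k => sub_nonpos.2 (hx₀ k)) ?_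
    (polyExcess_sub_eq_integral hxc hx hfxc hfx hy'int hy) ?_
  · exact fun t ht k => sub_nonpos.1 (hζ t ht k)
  · exact ((α.euclideanMulVecCLM.continuous.comp_continuousOn (hfx.sub hfxc)).integrableOn_Icc).sub
      ((EuclideanSpace.equiv (Fin K) ℝ).toContinuousLinearMap.integrable_comp hy'int)
  intro τ hτ hζτ
  obtain ⟨C, hC, hev⟩ :=
    exists_eventually_dotProduct_sub_le hf (hfacet τ (Ico_subset_Icc_self hτ)) hζτ
  have hev' := nhdsWithin_le_of_mem (Icc_mem_nhdsGE_of_mem hτ)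
    (((hxc_cont.prodMk (hy_cont.prodMk hx_cont)) τ (Ico_subset_Icc_self hτ)).eventually hev)
  obtain ⟨c, hτc, hc⟩ :=
    mem_nhdsGE_iff_exists_Icc_subset.1 (inter_mem hev' (Icc_mem_nhdsGE_of_mem hτ))
  refine ⟨C, hC, c, hτc, ?_⟩
  filter_upwards [ae_restrict_of_ae_restrict_of_subset (hc.trans inter_subset_right) hξ,
    ae_restrict_mem measurableSet_Icc] with s hξs hs j hj
  exact sub_le_iff_le_add'.2 ((hc hs).1 (f (xc s)) (y' s) hξs j hj)

/-- **Fixed dual vectors for a nonlinear system.** -/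
theorem fixed_dual_vectors {n K : ℕ}
    (f : EuclideanSpace ℝ (Fin n) → EuclideanSpace ℝ (Fin n))
    (hf : LocallyLipschitz f)
    (α : Matrix (Fin K) (Fin n) ℝ)
    (t₀ tf : ℝ) (ht : t₀ ≤ tf)
    (xc : ℝ → EuclideanSpace ℝ (Fin n))
    (hxc : ∀ t ∈ Set.Icc t₀ tf, HasDerivAt xc (f (xc t)) t)
    (y : ℝ → EuclideanSpace ℝ (Fin K)) (y' : ℝ → EuclideanSpace ℝ (Fin K))
    (hy'int : IntegrableOn y' (Set.Icc t₀ tf))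
    (hy : ∀ t ∈ Set.Icc t₀ tf, y t = y t₀ + ∫ s in t₀..t, y' s)
    -- (i) locally Lipschitz facets
    (hfacet : ∀ t ∈ Set.Icc t₀ tf, ∀ k : Fin K, PolyFacetLipschitz α (xc t) (y t) k)
    -- (ii) offset dynamics dominate the flow along each facet
    (hξ : ∀ᵐ t ∂(volume.restrict (Set.Icc t₀ tf)), ∀ k : Fin K,
      ∀ x : EuclideanSpace ℝ (Fin n), inPolyFacet α (xc t) (y t) k x →
        α k ⬝ᵥ (f x - f (xc t)) ≤ y' t k)
    (x : ℝ → EuclideanSpace ℝ (Fin n))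
    (hx : ∀ t ∈ Set.Icc t₀ tf, HasDerivAt x (f (x t)) t)
    (hx₀ : ∀ k, α.mulVec (x t₀ - xc t₀) k ≤ y t₀ k) :
    ∀ t ∈ Set.Icc t₀ tf, ∀ k, α.mulVec (x t - xc t) k ≤ y t k :=
  fixed_dual_vectors_general f hf α t₀ tf xc hxc y y' hy'int hy hfacet hξ x hx hx₀
end

section
/- (Interval flow invariance.) Let f : EuclideanSpace ℝ (Fin n) → EuclideanSpace ℝ (Fin n) be locally Lipschitz. Let y̲, ȳ : [0,T] → EuclideanSpace ℝ (Fin n) be differentiable curves with y̲ t ≤ ȳ t componentwise for all t, and suppose for every t ∈ [0,T] and every index i: (y̲' t)_i ≤ f(z)_i for every z with y̲ t ≤ z ≤ ȳ t and z_i = (y̲ t)_i, and (ȳ' t)_i ≥ f(z)_i for every z with y̲ t ≤ z ≤ ȳ t and z_i = (ȳ t)_i. Then every differentiable x : [0,T] → ℝⁿ with derivative f (x t) at every t and y̲ 0 ≤ x 0 ≤ ȳ 0 satisfies y̲ t ≤ x t ≤ ȳ t componentwise for all t ∈ [0,T]. -/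
/-!
Inflate the moving box by `δ t = ε * exp (c * t)`. At a time when a coordinate of `x` first
reaches a face of the inflated box, `x t` lies within `δ t` of its projection `z` onto the true
box, and `z` lies on the corresponding true face. The face hypothesis bounds `f z` there, and the
Lipschitz estimate `|f (x t) i - f z i| ≤ K * √n * δ t` transfers the bound to `f (x t)`; with
`c = K * √n + 1` the inflated face then moves strictly slower than `x`, so it is never crossed.
Letting `ε → 0` gives the claim.
-/

open Set Filter Topology NNReal

theorem abs_sub_max_min_le {a b x δ : ℝ} (hδ : 0 ≤ δ) (ha : a - δ ≤ x) (hb : x ≤ b + δ) :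
    |x - max a (min x b)| ≤ δ := by
  have hlow : x - δ ≤ min x b := le_min (by linarith) (by linarith)
  have hup : max a (min x b) ≤ x + δ :=
    max_le (by linarith) ((min_le_left _ _).trans (by linarith))
  rw [abs_sub_le_iff]
  constructor <;> linarith [le_max_right a (min x b)]

namespace EuclideanSpace

variable {ι : Type*}

theorem norm_le_sqrt_card_mul_of_forall_abs_le [Fintype ι] {v : EuclideanSpace ℝ ι} {r : ℝ}
    (hr : 0 ≤ r) (hv : ∀ i, |v i| ≤ r) : ‖v‖ ≤ √(Fintype.card ι) * r := by
  rw [EuclideanSpace.norm_eq]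
  calc √(∑ i, ‖v i‖ ^ 2) ≤ √(∑ _i : ι, r ^ 2) := by
        gcongr with i
        exact hv i
    _ = √(Fintype.card ι) * r := by
        simp [Real.sqrt_mul, Real.sqrt_sq hr]

def projBox (l u z : EuclideanSpace ℝ ι) : EuclideanSpace ℝ ι :=
  WithLp.toLp 2 fun j => max (l j) (min (z j) (u j))

variable {l u z : EuclideanSpace ℝ ι} {j : ι}

@[simp]
theorem projBox_apply : projBox l u z j = max (l j) (min (z j) (u j)) := rfl

theorem projBox_apply_mem (h : l j ≤ u j) : projBox l u z j ∈ Icc (l j) (u j) :=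
  ⟨le_max_left _ _, max_le h (min_le_right _ _)⟩

theorem projBox_apply_of_le (hlu : l j ≤ u j) (hz : z j ≤ l j) : projBox l u z j = l j := by
  simp [min_eq_left (hz.trans hlu), hz]

theorem projBox_apply_of_ge (hlu : l j ≤ u j) (hz : u j ≤ z j) : projBox l u z j = u j := by
  simp [hz, hlu]

theorem abs_sub_projBox_apply_le {δ : ℝ} (hδ : 0 ≤ δ) (hl : l j - δ ≤ z j)
    (hu : z j ≤ u j + δ) : |z j - projBox l u z j| ≤ δ :=
  abs_sub_max_min_le hδ hl hu

theorem norm_sub_projBox_le [Fintype ι] {δ : ℝ} (hδ : 0 ≤ δ)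
    (h : ∀ j, l j - δ ≤ z j ∧ z j ≤ u j + δ) :
    ‖z - projBox l u z‖ ≤ √(Fintype.card ι) * δ :=
  norm_le_sqrt_card_mul_of_forall_abs_le hδ fun j => abs_sub_projBox_apply_le hδ (h j).1 (h j).2

theorem _root_.ContinuousOn.projBox {s : Set ℝ} {l u z : ℝ → EuclideanSpace ℝ ι}
    (hl : ContinuousOn l s) (hu : ContinuousOn u s) (hz : ContinuousOn z s) :
    ContinuousOn (fun t => projBox (l t) (u t) (z t)) s := by
  refine (PiLp.continuous_toLp 2 _).comp_continuousOn (continuousOn_pi.2 fun j => ?_)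
  have hc : ∀ {w : ℝ → EuclideanSpace ℝ ι}, ContinuousOn w s → ContinuousOn (fun t => w t j) s :=
    fun hw => (PiLp.continuous_apply 2 _ j).comp_continuousOn hw
  exact (hc hl).sup ((hc hz).inf (hc hu))

end EuclideanSpace

open EuclideanSpace

theorem HasDerivAt.euclideanSpace_apply {ι : Type*} [Fintype ι] {x : ℝ → EuclideanSpace ℝ ι}
    {x' : EuclideanSpace ℝ ι} {t : ℝ} (hx : HasDerivAt x x' t) (i : ι) :
    HasDerivAt (fun s => x s i) (x' i) t :=
  (EuclideanSpace.proj (𝕜 := ℝ) i).hasFDerivAt.comp_hasDerivAt t hx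

theorem LipschitzOnWith.abs_apply_sub_projBox_le {ι κ : Type*} [Fintype ι] [Fintype κ]
    {f : EuclideanSpace ℝ ι → EuclideanSpace ℝ κ} {K : ℝ≥0} {S : Set (EuclideanSpace ℝ ι)}
    (hf : LipschitzOnWith K f S) {l u z : EuclideanSpace ℝ ι} (hz : z ∈ S)
    (hp : projBox l u z ∈ S) {δ : ℝ} (hδ : 0 ≤ δ) (hbox : ∀ j, l j - δ ≤ z j ∧ z j ≤ u j + δ)
    (i : κ) : |f z i - f (projBox l u z) i| ≤ K * (√(Fintype.card ι) * δ) :=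
  calc |f z i - f (projBox l u z) i| ≤ dist (f z) (f (projBox l u z)) := by
        simpa [dist_eq_norm] using PiLp.norm_apply_le (f z - f (projBox l u z)) i
    _ ≤ K * dist z (projBox l u z) := hf.dist_le_mul z hz _ hp
    _ ≤ K * (√(Fintype.card ι) * δ) := by
        rw [dist_eq_norm]
        exact mul_le_mul_of_nonneg_left (norm_sub_projBox_le hδ hbox) K.2

theorem HasDerivAt.eventually_lt_nhdsGT {g : ℝ → ℝ} {g' x : ℝ} (hg : HasDerivAt g g' x)
    (hg' : 0 < g') : ∀ᶠ t in 𝓝[>] x, g x < g t := by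
  have hslope := (hasDerivAt_iff_tendsto_slope.mp hg).mono_left (nhdsGT_le_nhdsNE x)
  filter_upwards [hslope.eventually (eventually_gt_nhds hg'), self_mem_nhdsWithin]
    with t ht hxt
  exact (slope_pos_iff hxt).mp ht

theorem nonneg_of_hasDerivAt_pos_at_zero {ι : Type*} [Finite ι] {g g' : ι → ℝ → ℝ} {a b : ℝ}
    (hg : ∀ k, ∀ t ∈ Icc a b, HasDerivAt (g k) (g' k t) t) (ha : ∀ k, 0 ≤ g k a)
    (hpos : ∀ t ∈ Ico a b, (∀ j, 0 ≤ g j t) → ∀ k, g k t = 0 → 0 < g' k t) :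
    ∀ t ∈ Icc a b, ∀ k, 0 ≤ g k t := by
  set s := {t | ∀ k, 0 ≤ g k t}
  have hclosed : IsClosed (s ∩ Icc a b) := by
    have hs : s ∩ Icc a b = Icc a b ∩ ⋂ k, Icc a b ∩ g k ⁻¹' Ici 0 := by
      ext t
      simp only [s, mem_inter_iff, mem_iInter, mem_ofPred_eq, mem_preimage, mem_Ici]
      exact ⟨fun h => ⟨h.2, fun k => ⟨h.2, h.1 k⟩⟩, fun h => ⟨fun k => (h.2 k).2, h.1⟩⟩
    rw [hs]
    refine isClosed_Icc.inter (isClosed_iInter fun k => ?_)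
    exact ContinuousOn.preimage_isClosed_of_isClosed
      (fun t ht => (hg k t ht).continuousAt.continuousWithinAt) isClosed_Icc isClosed_Ici
  refine fun t ht => hclosed.Icc_subset_of_forall_mem_nhdsWithin ha ?_ ht
  rintro t ⟨hst, htab⟩
  refine eventually_all.2 fun k => ?_
  have hd := hg k t (Ico_subset_Icc_self htab)
  rcases (hst k).eq_or_lt with hzero | hposk
  · filter_upwards [hd.eventually_lt_nhdsGT (hpos t htab hst k hzero.symm)] with u hu
    linarith
  · exact ((hd.continuousAt.eventually (eventually_gt_nhds hposk)).filter_mono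
      nhdsWithin_le_nhds).mono fun _ => le_of_lt

theorem interval_flow_invariance_inflated {n : ℕ}
    {f : EuclideanSpace ℝ (Fin n) → EuclideanSpace ℝ (Fin n)} {K : ℝ≥0}
    {S : Set (EuclideanSpace ℝ (Fin n))} (hfS : LipschitzOnWith K f S) {T : ℝ}
    {yl yu yl' yu' x : ℝ → EuclideanSpace ℝ (Fin n)}
    (hxS : ∀ t ∈ Icc 0 T, x t ∈ S) (hpS : ∀ t ∈ Icc 0 T, projBox (yl t) (yu t) (x t) ∈ S)
    (hyl : ∀ t ∈ Icc 0 T, HasDerivAt yl (yl' t) t)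
    (hyu : ∀ t ∈ Icc 0 T, HasDerivAt yu (yu' t) t)
    (hle : ∀ t ∈ Icc 0 T, ∀ i, yl t i ≤ yu t i)
    (hlow : ∀ t ∈ Icc 0 T, ∀ i, ∀ z : EuclideanSpace ℝ (Fin n),
      (∀ j, yl t j ≤ z j ∧ z j ≤ yu t j) → z i = yl t i → yl' t i ≤ f z i)
    (hup : ∀ t ∈ Icc 0 T, ∀ i, ∀ z : EuclideanSpace ℝ (Fin n),
      (∀ j, yl t j ≤ z j ∧ z j ≤ yu t j) → z i = yu t i → f z i ≤ yu' t i)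
    (hx : ∀ t ∈ Icc 0 T, HasDerivAt x (f (x t)) t)
    (hx0 : ∀ i, yl 0 i ≤ x 0 i ∧ x 0 i ≤ yu 0 i) {ε : ℝ} (hε : 0 < ε) :
    ∀ t ∈ Icc 0 T, ∀ i, yl t i - ε * Real.exp ((K * √n + 1) * t) ≤ x t i ∧
      x t i ≤ yu t i + ε * Real.exp ((K * √n + 1) * t) := by
  set c : ℝ := K * √n + 1
  set δ : ℝ → ℝ := fun t => ε * Real.exp (c * t)
  have hδ_pos : ∀ t, 0 < δ t := fun t => by positivity
  have hδ : ∀ t, HasDerivAt δ (c * δ t) t := fun t => by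
    have := ((hasDerivAt_id' t).const_mul c).exp.const_mul ε
    exact this.congr_deriv (by simp only [δ]; ring)
  -- `g (.inl i)` and `g (.inr i)`: signed distances of `x` to the `i`-th lower and upper faces
  -- of the inflated box
  let g : Fin n ⊕ Fin n → ℝ → ℝ :=
    Sum.elim (fun i t => x t i - (yl t i - δ t)) (fun i t => yu t i + δ t - x t i)
  let g' : Fin n ⊕ Fin n → ℝ → ℝ :=
    Sum.elim (fun i t => f (x t) i - (yl' t i - c * δ t))
      (fun i t => yu' t i + c * δ t - f (x t) i)
  have hg : ∀ k, ∀ t ∈ Icc 0 T, HasDerivAt (g k) (g' k t) t := by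
    rintro (i | i) t ht
    · exact ((hx t ht).euclideanSpace_apply i).sub
        (((hyl t ht).euclideanSpace_apply i).sub (hδ t))
    · exact (((hyu t ht).euclideanSpace_apply i).add (hδ t)).sub
        ((hx t ht).euclideanSpace_apply i)
  have hg0 : ∀ k, 0 ≤ g k 0 := by
    rintro (i | i) <;> simp only [g, Sum.elim_inl, Sum.elim_inr] <;>
      linarith [hx0 i, hδ_pos 0]
  have hg_pos : ∀ t ∈ Ico 0 T, (∀ j, 0 ≤ g j t) → ∀ k, g k t = 0 → 0 < g' k t := by
    intro t ht hgt
    have ht : t ∈ Icc 0 T := Ico_subset_Icc_self ht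
    simp only [g, Sum.forall, Sum.elim_inl, Sum.elim_inr] at hgt
    have hbox : ∀ j, yl t j - δ t ≤ x t j ∧ x t j ≤ yu t j + δ t := fun j =>
      ⟨by linarith [hgt.1 j], by linarith [hgt.2 j]⟩
    have hmem := fun j => projBox_apply_mem (z := x t) (hle t ht j)
    have hclose := hfS.abs_apply_sub_projBox_le (hxS t ht) (hpS t ht) (hδ_pos t).le hbox
    rw [Fintype.card_fin] at hclose
    have hcδ : c * δ t = K * (√n * δ t) + δ t := by ring
    rintro (i | i) hi <;> simp only [g, g', Sum.elim_inl, Sum.elim_inr] at hi ⊢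
    · have hface := projBox_apply_of_le (z := x t) (hle t ht i) (by linarith [hδ_pos t])
      linarith [hlow t ht i _ hmem hface, abs_le.mp (hclose i), hδ_pos t]
    · have hface := projBox_apply_of_ge (z := x t) (hle t ht i) (by linarith [hδ_pos t])
      linarith [hup t ht i _ hmem hface, abs_le.mp (hclose i), hδ_pos t]
  intro t ht i
  have hgt := nonneg_of_hasDerivAt_pos_at_zero hg hg0 hg_pos t ht
  simp only [g, δ, Sum.forall, Sum.elim_inl, Sum.elim_inr] at hgt
  exact ⟨by linarith [hgt.1 i], by linarith [hgt.2 i]⟩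

theorem interval_flow_invariance_general {n : ℕ}
    (f : EuclideanSpace ℝ (Fin n) → EuclideanSpace ℝ (Fin n))
    (hf : LocallyLipschitz f)
    (T : ℝ)
    (yl yu : ℝ → EuclideanSpace ℝ (Fin n))
    (yl' yu' : ℝ → EuclideanSpace ℝ (Fin n))
    (hyl : ∀ t ∈ Set.Icc 0 T, HasDerivAt yl (yl' t) t)
    (hyu : ∀ t ∈ Set.Icc 0 T, HasDerivAt yu (yu' t) t)
    (hle : ∀ t ∈ Set.Icc 0 T, ∀ i, yl t i ≤ yu t i)
    (hlow : ∀ t ∈ Set.Icc 0 T, ∀ i, ∀ z : EuclideanSpace ℝ (Fin n),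
      (∀ j, yl t j ≤ z j ∧ z j ≤ yu t j) → z i = yl t i → yl' t i ≤ f z i)
    (hup : ∀ t ∈ Set.Icc 0 T, ∀ i, ∀ z : EuclideanSpace ℝ (Fin n),
      (∀ j, yl t j ≤ z j ∧ z j ≤ yu t j) → z i = yu t i → f z i ≤ yu' t i)
    (x : ℝ → EuclideanSpace ℝ (Fin n))
    (hx : ∀ t ∈ Set.Icc 0 T, HasDerivAt x (f (x t)) t)
    (hx0 : ∀ i, yl 0 i ≤ x 0 i ∧ x 0 i ≤ yu 0 i) :
    ∀ t ∈ Set.Icc 0 T, ∀ i, yl t i ≤ x t i ∧ x t i ≤ yu t i := by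
  have hcont : ∀ {y y' : ℝ → EuclideanSpace ℝ (Fin n)},
      (∀ t ∈ Icc 0 T, HasDerivAt y (y' t) t) → ContinuousOn y (Icc 0 T) :=
    fun hy t ht => (hy t ht).continuousAt.continuousWithinAt
  set S := x '' Icc 0 T ∪ (fun t => projBox (yl t) (yu t) (x t)) '' Icc 0 T
  have hS : IsCompact S := (isCompact_Icc.image_of_continuousOn (hcont hx)).union
    (isCompact_Icc.image_of_continuousOn ((hcont hyl).projBox (hcont hyu) (hcont hx)))
  obtain ⟨K, hK⟩ := hf.locallyLipschitzOn.exists_lipschitzOnWith_of_compact hS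
  have hinflated := fun ε (hε : 0 < ε) => interval_flow_invariance_inflated hK
    (fun t ht => .inl ⟨t, ht, rfl⟩) (fun t ht => .inr ⟨t, ht, rfl⟩)
    hyl hyu hle hlow hup hx hx0 hε
  intro t ht i
  have hsmall : ∀ η > 0, ∃ ε > 0, ε * Real.exp ((K * √n + 1) * t) = η := fun η hη =>
    ⟨η / Real.exp ((K * √n + 1) * t), by positivity, div_mul_cancel₀ _ (Real.exp_pos _).ne'⟩
  constructor <;> refine le_of_forall_pos_le_add fun η hη => ?_ <;>
    obtain ⟨ε, hε, rfl⟩ := hsmall η hη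
  · linarith [(hinflated ε hε t ht i).1]
  · linarith [(hinflated ε hε t ht i).2]

/-- **Interval flow invariance.** If the lower face velocities underapproximate the vector
field and the upper face velocities overapproximate it, trajectories stay in the moving
interval `[y̲ t, ȳ t]`. -/
theorem interval_flow_invariance {n : ℕ}
    (f : EuclideanSpace ℝ (Fin n) → EuclideanSpace ℝ (Fin n))
    (hf : LocallyLipschitz f)
    (T : ℝ) (hT : 0 ≤ T)
    (yl yu : ℝ → EuclideanSpace ℝ (Fin n))
    (yl' yu' : ℝ → EuclideanSpace ℝ (Fin n))
    (hyl : ∀ t ∈ Set.Icc 0 T, HasDerivAt yl (yl' t) t)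
    (hyu : ∀ t ∈ Set.Icc 0 T, HasDerivAt yu (yu' t) t)
    (hle : ∀ t ∈ Set.Icc 0 T, ∀ i, yl t i ≤ yu t i)
    (hlow : ∀ t ∈ Set.Icc 0 T, ∀ i, ∀ z : EuclideanSpace ℝ (Fin n),
      (∀ j, yl t j ≤ z j ∧ z j ≤ yu t j) → z i = yl t i → yl' t i ≤ f z i)
    (hup : ∀ t ∈ Set.Icc 0 T, ∀ i, ∀ z : EuclideanSpace ℝ (Fin n),
      (∀ j, yl t j ≤ z j ∧ z j ≤ yu t j) → z i = yu t i → f z i ≤ yu' t i)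
    (x : ℝ → EuclideanSpace ℝ (Fin n))
    (hx : ∀ t ∈ Set.Icc 0 T, HasDerivAt x (f (x t)) t)
    (hx0 : ∀ i, yl 0 i ≤ x 0 i ∧ x 0 i ≤ yu 0 i) :
    ∀ t ∈ Set.Icc 0 T, ∀ i, yl t i ≤ x t i ∧ x t i ≤ yu t i :=
  interval_flow_invariance_general f hf T yl yu yl' yu' hyl hyu hle hlow hup x hx hx0
end

section
/- (Exponential contraction bound.) Let f : EuclideanSpace ℝ (Fin n) → EuclideanSpace ℝ (Fin n) and c ∈ ℝ satisfy the one-sided Lipschitz condition ⟪f u - f v, u - v⟫ ≤ c · ‖u - v‖² for all u, v. Let x, x̊ : [t₀, t_f] → EuclideanSpace ℝ (Fin n) be differentiable with derivatives f (x t) and f (x̊ t) at every t. Then for all t ∈ [t₀, t_f], ‖x t - x̊ t‖ ≤ exp (c (t - t₀)) · ‖x t₀ - x̊ t₀‖. -/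
open Set Real

section OneSidedGronwall

variable {E : Type*} [NormedAddCommGroup E] [InnerProductSpace ℝ E]
  {v v' : ℝ → E} {c a b : ℝ}

/-- `t ↦ ‖v t‖²` has derivative `2 ⟪v t, v' t⟫ ≤ 2c ‖v t‖²`, so Grönwall applies to it
with rate `2c` even though no bound on `‖v' t‖` is available. -/
theorem norm_sq_le_of_inner_deriv_le (hv : ∀ t ∈ Icc a b, HasDerivAt v (v' t) t)
    (hc : ∀ t ∈ Ico a b, inner ℝ (v' t) (v t) ≤ c * ‖v t‖ ^ 2) :
    ∀ t ∈ Icc a b, ‖v t‖ ^ 2 ≤ ‖v a‖ ^ 2 * exp (2 * c * (t - a)) := by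
  have hderiv (t : ℝ) (ht : t ∈ Icc a b) :
      HasDerivAt (‖v ·‖ ^ 2) (2 * inner ℝ (v t) (v' t)) t :=
    (hv t ht).norm_sq
  intro t ht
  rw [← gronwallBound_ε0]
  refine le_gronwallBound_of_liminf_deriv_right_le (f' := fun t ↦ 2 * inner ℝ (v t) (v' t))
    (fun t ht ↦ (hderiv t ht).continuousAt.continuousWithinAt)
    (fun t ht _ hr ↦ (hderiv t (Ico_subset_Icc_self ht)).hasDerivWithinAt.liminf_right_slope_le hr)
    le_rfl (fun t ht ↦ ?_) t ht
  rw [real_inner_comm, add_zero, mul_assoc]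
  exact mul_le_mul_of_nonneg_left (hc t ht) zero_le_two

theorem norm_le_exp_mul_of_inner_deriv_le (hv : ∀ t ∈ Icc a b, HasDerivAt v (v' t) t)
    (hc : ∀ t ∈ Ico a b, inner ℝ (v' t) (v t) ≤ c * ‖v t‖ ^ 2) :
    ∀ t ∈ Icc a b, ‖v t‖ ≤ exp (c * (t - a)) * ‖v a‖ := by
  intro t ht
  have hsq := norm_sq_le_of_inner_deriv_le hv hc t ht
  have hexp : ‖v a‖ ^ 2 * exp (2 * c * (t - a)) = (exp (c * (t - a)) * ‖v a‖) ^ 2 := by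
    rw [mul_pow, ← exp_nat_mul]
    ring_nf
  rw [hexp] at hsq
  exact (pow_le_pow_iff_left₀ (norm_nonneg _) (by positivity) two_ne_zero).mp hsq

end OneSidedGronwall

/-- **Exponential contraction bound.** A one-sided Lipschitz (logarithmic norm) bound `c`
yields the Grönwall estimate `‖x t - x̊ t‖ ≤ exp (c (t - t₀)) ‖x t₀ - x̊ t₀‖`. -/
theorem exponential_contraction_bound {n : ℕ}
    (f : EuclideanSpace ℝ (Fin n) → EuclideanSpace ℝ (Fin n)) (c : ℝ)
    (hosl : ∀ u v : EuclideanSpace ℝ (Fin n),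
      (inner ℝ (f u - f v) (u - v) : ℝ) ≤ c * ‖u - v‖ ^ 2)
    (t₀ tf : ℝ)
    (x xc : ℝ → EuclideanSpace ℝ (Fin n))
    (hx : ∀ t ∈ Set.Icc t₀ tf, HasDerivAt x (f (x t)) t)
    (hxc : ∀ t ∈ Set.Icc t₀ tf, HasDerivAt xc (f (xc t)) t) :
    ∀ t ∈ Set.Icc t₀ tf, ‖x t - xc t‖ ≤ Real.exp (c * (t - t₀)) * ‖x t₀ - xc t₀‖ :=
  norm_le_exp_mul_of_inner_deriv_le (fun t ht ↦ (hx t ht).sub (hxc t ht))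
    (fun t _ ↦ hosl (x t) (xc t))
end

section
/- Let x̊ ∈ EuclideanSpace ℝ (Fin n), let α be an invertible real n×n matrix, let J be a real n×n matrix, and let M₁, …, M_N be real n×n matrices. Suppose c ∈ ℝ satisfies: for every i, the matrix c • 1 - (α*(M_i - J)*α⁻¹ + (α*(M_i - J)*α⁻¹)ᵀ) is positive semidefinite. Then for every M in the convex hull of {M₁,…,M_N} and every x ∈ ℝⁿ, 2 * ⟪(αᵀ*α).mulVec (x - x̊), (M - J).mulVec (x - x̊)⟫ ≤ c * ⟪(αᵀ*α).mulVec (x - x̊), x - x̊⟫. -/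
open Matrix

/-!
Writing `w = α v` with `v = x - x̊`, the quadratic forms of the theorem become
`⟪αᵀα v, B v⟫ = ⟪w, α B α⁻¹ w⟫` and `⟪αᵀα v, v⟫ = ⟪w, w⟫`, so at a corner `Mᵢ` the claim is the
PSD condition `wᵀ (c • 1 - (A + Aᵀ)) w ≥ 0` for `A = α (Mᵢ - J) α⁻¹`. For fixed `x` the claim
is a half-space condition on `M`, hence passes from the corners to their convex hull.
-/

namespace Matrix

variable {n : Type*} [Fintype n]

theorem two_mul_dotProduct_mulVec_le_of_posSemidef [DecidableEq n] {A : Matrix n n ℝ} {c : ℝ}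
    (h : (c • (1 : Matrix n n ℝ) - (A + Aᵀ)).PosSemidef) (w : n → ℝ) :
    2 * (w ⬝ᵥ A *ᵥ w) ≤ c * (w ⬝ᵥ w) := by
  have hnonneg : 0 ≤ w ⬝ᵥ (c • (1 : Matrix n n ℝ) - (A + Aᵀ)) *ᵥ w :=
    h.dotProduct_mulVec_nonneg w
  have htranspose : w ⬝ᵥ Aᵀ *ᵥ w = w ⬝ᵥ A *ᵥ w := by
    rw [dotProduct_mulVec, vecMul_transpose, dotProduct_comm]
  rw [sub_mulVec, add_mulVec, smul_mulVec, one_mulVec, dotProduct_sub, dotProduct_add,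
    dotProduct_smul, smul_eq_mul, htranspose] at hnonneg
  linarith

theorem mulVec_dotProduct_mulVec (α : Matrix n n ℝ) (u v : n → ℝ) :
    α *ᵥ u ⬝ᵥ α *ᵥ v = (αᵀ * α) *ᵥ u ⬝ᵥ v := by
  rw [dotProduct_mulVec, ← mulVec_transpose, mulVec_mulVec]

theorem mulVec_dotProduct_conj_mulVec [DecidableEq n] {α : Matrix n n ℝ} (hα : IsUnit α)
    (B : Matrix n n ℝ) (v : n → ℝ) :
    α *ᵥ v ⬝ᵥ (α * B * α⁻¹) *ᵥ (α *ᵥ v) = (αᵀ * α) *ᵥ v ⬝ᵥ B *ᵥ v := by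
  rw [mulVec_mulVec, nonsing_inv_mul_cancel_right _ _ ((isUnit_iff_isUnit_det α).mp hα),
    ← mulVec_mulVec, mulVec_dotProduct_mulVec]

theorem two_mul_gram_dotProduct_mulVec_le_of_posSemidef [DecidableEq n] {α : Matrix n n ℝ}
    (hα : IsUnit α) {B : Matrix n n ℝ} {c : ℝ}
    (h : (c • (1 : Matrix n n ℝ) - (α * B * α⁻¹ + (α * B * α⁻¹)ᵀ)).PosSemidef) (v : n → ℝ) :
    2 * ((αᵀ * α) *ᵥ v ⬝ᵥ B *ᵥ v) ≤ c * ((αᵀ * α) *ᵥ v ⬝ᵥ v) := by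
  rw [← mulVec_dotProduct_conj_mulVec hα, ← mulVec_dotProduct_mulVec]
  exact two_mul_dotProduct_mulVec_le_of_posSemidef h (α *ᵥ v)

theorem convex_setOf_two_mul_dotProduct_sub_mulVec_le (u v : n → ℝ) (J : Matrix n n ℝ) (r : ℝ) :
    Convex ℝ {M : Matrix n n ℝ | 2 * (u ⬝ᵥ (M - J) *ᵥ v) ≤ r} := by
  have hlinear : IsLinearMap ℝ fun M : Matrix n n ℝ => u ⬝ᵥ M *ᵥ v :=
    ⟨fun M N => by rw [add_mulVec, dotProduct_add],
      fun a M => by rw [smul_mulVec, dotProduct_smul]⟩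
  have hset : {M : Matrix n n ℝ | 2 * (u ⬝ᵥ (M - J) *ᵥ v) ≤ r} =
      {M | u ⬝ᵥ M *ᵥ v ≤ r / 2 + u ⬝ᵥ J *ᵥ v} := by
    ext M
    simp only [Set.mem_ofPred_eq, sub_mulVec, dotProduct_sub]
    constructor <;> intro h <;> linarith
  rw [hset]
  exact convex_halfSpace_le hlinear _

end Matrix

/-- The corner LMI condition yields `ξ ≤ c·y` on the ellipsoid boundary: if
`c • 1 - (α(Mᵢ - J)α⁻¹ + (α(Mᵢ - J)α⁻¹)ᵀ) ⪰ 0` for each corner `Mᵢ`, then for every `M`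
in the convex hull and every `x`,
`2⟪αᵀα(x - x̊), (M - J)(x - x̊)⟫ ≤ c⟪αᵀα(x - x̊), x - x̊⟫`. -/
theorem corner_lmi_facet_bound {n N : ℕ}
    (xc : EuclideanSpace ℝ (Fin n))
    (α J : Matrix (Fin n) (Fin n) ℝ) (hα : IsUnit α)
    (Ms : Fin N → Matrix (Fin n) (Fin n) ℝ) (c : ℝ)
    (hLMI : ∀ i, (c • (1 : Matrix (Fin n) (Fin n) ℝ) -
        (α * (Ms i - J) * α⁻¹ + (α * (Ms i - J) * α⁻¹)ᵀ)).PosSemidef) :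
    ∀ M ∈ convexHull ℝ (Set.range Ms), ∀ x : EuclideanSpace ℝ (Fin n),
      2 * ((αᵀ * α).mulVec (x - xc) ⬝ᵥ (M - J).mulVec (x - xc)) ≤
        c * ((αᵀ * α).mulVec (x - xc) ⬝ᵥ (x - xc)) := by
  intro M hM x
  have hcorners : Set.range Ms ⊆ {M | 2 * ((αᵀ * α) *ᵥ (x - xc) ⬝ᵥ (M - J) *ᵥ (x - xc)) ≤
      c * ((αᵀ * α) *ᵥ (x - xc) ⬝ᵥ (x - xc))} := by
    rintro _ ⟨i, rfl⟩
    exact two_mul_gram_dotProduct_mulVec_le_of_posSemidef hα (hLMI i) _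
  exact convexHull_min hcorners (convex_setOf_two_mul_dotProduct_sub_mulVec_le _ _ _ _) hM
end
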